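/- Let S[A] and G[B] be composite structures (with relation μ marking attachment to base points). Every isomorphism ρ from S[A] to G[B] decomposes as ρ = θ ∪ ⋃_{x ∈ S} ψ_x, where θ := ρ restricted to S is an isomorphism S ≅ G and ψ_x := ρ restricted to A_x is an isomorphism A_x ≅ B_{θ(x)} for each x ∈ S. -/
import Mathlib


/-- The universe of a composite structure `S[A]`: base points `σ` together with,
for each base point `x`, the points of the component structure `A x`. -/
abbrev Composite (σ : Type*) (A : σ → Type*) : Type _ := σ ⊕ (Σ x : σ, A x)

/-- The attachment relation `μ` of a composite structure:
`μ a x` holds when `a` is a point of the component attached to the base point `x`,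
together with `μ x x` for each base point `x`. -/
def muRel {σ : Type*} {A : σ → Type*} : Composite σ A → Composite σ A → Prop
  | Sum.inl x, Sum.inl y => x = y
  | Sum.inr p, Sum.inl y => p.1 = y
  | _, _ => False

/-- The lift of the base-structure relations to the composite universe. -/
def liftBase {σ : Type*} {A : σ → Type*} {ι : Type*} (R : ι → σ → σ → Prop) (i : ι) :
    Composite σ A → Composite σ A → Prop
  | Sum.inl x, Sum.inl y => R i x y
  | _, _ => False

/-- The lift of the component-structure relations to the composite universe. -/
def liftComp {σ : Type*} {A : σ → Type*} {κ : Type*}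
    (Q : ∀ x : σ, κ → A x → A x → Prop) (k : κ) :
    Composite σ A → Composite σ A → Prop
  | Sum.inr p, Sum.inr q => ∃ h : p.1 = q.1, Q q.1 k (h ▸ p.2) q.2
  | _, _ => False

private lemma muRel_self_aux {α : Type*} {C : α → Type*} (u : Composite α C)
    (h : muRel u u) : ∃ x, u = Sum.inl x := by
  match u with
  | Sum.inl x => exact ⟨x, rfl⟩
  | Sum.inr p => exact absurd h (by simp [muRel])

private lemma liftComp_inr_aux {α : Type*} {C : α → Type*} {κ : Type*}
    (Q : ∀ y : α, κ → C y → C y → Prop) (k : κ) (y : α) (c d : C y) :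
    liftComp Q k (Sum.inr ⟨y, c⟩) (Sum.inr ⟨y, d⟩) ↔ Q y k c d := by
  constructor
  · rintro ⟨h, hq⟩; exact hq
  · intro h; exact ⟨rfl, h⟩

theorem composite_iso_decomposes {σ τ : Type*} {A : σ → Type*} {B : τ → Type*}
    {ι κ : Type*}
    (RS : ι → σ → σ → Prop) (RG : ι → τ → τ → Prop)
    (QA : ∀ x : σ, κ → A x → A x → Prop) (QB : ∀ g : τ, κ → B g → B g → Prop)
    (ρ : Composite σ A ≃ Composite τ B)
    (hmu : ∀ u v, muRel u v ↔ muRel (ρ u) (ρ v))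
    (hbase : ∀ (i : ι) (u v), liftBase RS i u v ↔ liftBase RG i (ρ u) (ρ v))
    (hcomp : ∀ (k : κ) (u v), liftComp QA k u v ↔ liftComp QB k (ρ u) (ρ v)) :
    ∃ θ : σ ≃ τ,
      (∀ (i : ι) (x y : σ), RS i x y ↔ RG i (θ x) (θ y)) ∧
      (∀ x : σ, ρ (Sum.inl x) = Sum.inl (θ x)) ∧
      ∃ ψ : ∀ x : σ, A x ≃ B (θ x),
        (∀ (x : σ) (k : κ) (a b : A x), QA x k a b ↔ QB (θ x) k (ψ x a) (ψ x b)) ∧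
        (∀ (x : σ) (a : A x), ρ (Sum.inr ⟨x, a⟩) = Sum.inr ⟨θ x, ψ x a⟩) := by
  classical
  -- θ on objects
  have hfex : ∀ x : σ, ∃ t, ρ (Sum.inl x) = Sum.inl t := by
    intro x
    exact muRel_self_aux (ρ (Sum.inl x)) ((hmu (Sum.inl x) (Sum.inl x)).1 rfl)
  choose f hf using hfex
  have hmu' : ∀ u v, muRel (ρ.symm u) (ρ.symm v) ↔ muRel u v := by
    intro u v
    simpa using hmu (ρ.symm u) (ρ.symm v)
  have hgex : ∀ t : τ, ∃ x, ρ.symm (Sum.inl t) = Sum.inl x := by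
    intro t
    exact muRel_self_aux (ρ.symm (Sum.inl t)) ((hmu' (Sum.inl t) (Sum.inl t)).2 rfl)
  choose g hg using hgex
  have hgf : ∀ x, g (f x) = x := by
    intro x
    have h1 : ρ.symm (Sum.inl (f x)) = Sum.inl x := by
      rw [← hf x]; simp
    rw [hg (f x)] at h1
    exact Sum.inl.inj h1
  have hfg : ∀ t, f (g t) = t := by
    intro t
    have h1 : ρ (Sum.inl (g t)) = Sum.inl t := by
      rw [← hg t]; simp
    rw [hf (g t)] at h1
    exact Sum.inl.inj h1
  refine ⟨⟨f, g, hgf, hfg⟩, ?_, hf, ?_⟩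
  · intro i x y
    have := hbase i (Sum.inl x) (Sum.inl y)
    rw [hf x, hf y] at this
    simpa [liftBase] using this
  -- component maps
  have hFex : ∀ (x : σ) (a : A x), ∃ b : B (f x), ρ (Sum.inr ⟨x, a⟩) = Sum.inr ⟨f x, b⟩ := by
    intro x a
    have h1 : muRel (ρ (Sum.inr ⟨x, a⟩)) (Sum.inl (f x)) := by
      have := (hmu (Sum.inr ⟨x, a⟩) (Sum.inl x)).1 (by simp [muRel])
      rwa [hf x] at this
    match h2 : ρ (Sum.inr ⟨x, a⟩) with
    | Sum.inl z =>
        rw [h2] at h1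
        have : ρ (Sum.inr ⟨x, a⟩) = ρ (Sum.inl x) := by
          rw [h2, hf x, show z = f x from h1]
        exact absurd (ρ.injective this) (by simp)
    | Sum.inr q =>
        obtain ⟨t, b⟩ := q
        rw [h2] at h1
        have ht : t = f x := h1
        subst ht
        exact ⟨b, rfl⟩
  choose F hF using hFex
  have hGex : ∀ (x : σ) (b : B (f x)), ∃ a : A x,
      ρ.symm (Sum.inr ⟨f x, b⟩) = Sum.inr ⟨x, a⟩ := by
    intro x b
    have hgx : ρ.symm (Sum.inl (f x)) = Sum.inl x := by rw [← hf x]; simp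
    have h1 : muRel (ρ.symm (Sum.inr ⟨f x, b⟩)) (Sum.inl x) := by
      have := (hmu' (Sum.inr ⟨f x, b⟩) (Sum.inl (f x))).2 (by simp [muRel])
      rwa [hgx] at this
    match h2 : ρ.symm (Sum.inr ⟨f x, b⟩) with
    | Sum.inl z =>
        rw [h2] at h1
        have : ρ.symm (Sum.inr ⟨f x, b⟩) = ρ.symm (Sum.inl (f x)) := by
          rw [h2, hgx, show z = x from h1]
        exact absurd (ρ.symm.injective this) (by simp)
    | Sum.inr q =>
        obtain ⟨t, a⟩ := q
        rw [h2] at h1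
        have ht : t = x := h1
        subst ht
        exact ⟨a, rfl⟩
  choose G hG using hGex
  have hGF : ∀ (x : σ) (a : A x), G x (F x a) = a := by
    intro x a
    have h1 : ρ.symm (Sum.inr ⟨f x, F x a⟩) = Sum.inr ⟨x, a⟩ := by
      rw [← hF x a]; simp
    rw [hG x (F x a)] at h1
    have := Sum.inr.inj h1
    simpa using this
  have hFG : ∀ (x : σ) (b : B (f x)), F x (G x b) = b := by
    intro x b
    have h1 : ρ (Sum.inr ⟨x, G x b⟩) = Sum.inr ⟨f x, b⟩ := by
      rw [← hG x b]; simp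
    rw [hF x (G x b)] at h1
    have := Sum.inr.inj h1
    simpa using this
  refine ⟨fun x => ⟨F x, G x, hGF x, hFG x⟩, ?_, fun x a => hF x a⟩
  intro x k a b
  have := hcomp k (Sum.inr ⟨x, a⟩) (Sum.inr ⟨x, b⟩)
  rw [hF x a, hF x b] at this
  exact ((liftComp_inr_aux QA k x a b).symm.trans this).trans (liftComp_inr_aux QB k (f x) (F x a) (F x b))
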